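/- arXiv:2308.15438 — 2 statements merged into one kernel-verified Lean document; each statement's English description precedes it below -/
import Mathlib

section
/- The linear map α ↦ α ∧ ψ₀ from Λ²(ℝ⁷)* to Λ⁶(ℝ⁷)* has kernel of dimension 14, where ψ₀ is the standard G2 4-form; equivalently, the subspace Λ²₁₄ = {α ∈ Λ²(ℝ⁷)* : α ∧ ψ₀ = 0} has dimension 14. -/
/-!
Wedging with the 4-form `ψ₀` maps `Λ²` onto `Λ⁶`: for every `m`, the basis 6-form omitting
`θ^m` equals `θ^{ij} ∧ ψ₀` for a suitable pair `i, j ≠ m`, because exactly one of the seven terms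
of `ψ₀` avoids both `i` and `j`. Rank–nullity then gives `dim Λ² − dim Λ⁶ = 21 − 7 = 14`.
-/

set_option synthInstance.maxHeartbeats 1000000
set_option maxHeartbeats 1000000

noncomputable section

/-- `ℝ⁷`. -/
abbrev V : Type := Fin 7 → ℝ
/-- The dual space `(ℝ⁷)*`. -/
abbrev Vd : Type := Module.Dual ℝ V
/-- The exterior algebra `Λ(ℝ⁷)*` of the dual space; wedge product is multiplication. -/
abbrev Lam : Type := ExteriorAlgebra ℝ Vd

/-- The standard basis vectors of `ℝ⁷`. -/
def e (i : Fin 7) : V := Pi.single i 1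
/-- The standard dual basis `θ¹,...,θ⁷` of `(ℝ⁷)*` (0-indexed). -/
def θ (i : Fin 7) : Vd := LinearMap.proj i

/-- `θ^i` as an element of the exterior algebra. -/
def θ1 (i : Fin 7) : Lam := ExteriorAlgebra.ι ℝ (θ i)
/-- `θ^{ijk} = θ^i ∧ θ^j ∧ θ^k`. -/
def w3 (i j k : Fin 7) : Lam := θ1 i * θ1 j * θ1 k
/-- `θ^{ijkl}`. -/
def w4 (i j k l : Fin 7) : Lam := θ1 i * θ1 j * θ1 k * θ1 l

/-- The standard G₂ 3-form
`φ₀ = θ^{123} + θ^{145} + θ^{167} + θ^{246} − θ^{257} − θ^{347} − θ^{356}` (indices 0-based). -/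
def phi0 : Lam :=
  w3 0 1 2 + w3 0 3 4 + w3 0 5 6 + w3 1 3 5 - w3 1 4 6 - w3 2 3 6 - w3 2 4 5
/-- The standard G₂ 4-form
`ψ₀ = θ^{4567} + θ^{2367} + θ^{2345} + θ^{1357} − θ^{1346} − θ^{1256} − θ^{1247}`. -/
def psi0 : Lam :=
  w4 3 4 5 6 + w4 1 2 5 6 + w4 1 2 3 4 + w4 0 2 4 6 - w4 0 2 3 5 - w4 0 1 4 5 - w4 0 1 3 6
/-- The Euclidean volume form `vol₀ = θ^{1⋯7}`. -/
def vol0 : Lam := θ1 0 * θ1 1 * θ1 2 * θ1 3 * θ1 4 * θ1 5 * θ1 6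

/-- Evaluation of a `k`-fold wedge of covectors on a `k`-tuple of vectors, as an
alternating map in the covectors: `(f₁,…,f_k) ↦ det (f_a (x b))`. -/
def evalAt {k : ℕ} (x : Fin k → V) : Vd [⋀^Fin k]→ₗ[ℝ] ℝ :=
  (Matrix.detRowAlternating : (Fin k → ℝ) [⋀^Fin k]→ₗ[ℝ] ℝ).compLinearMap
    (LinearMap.pi fun b => LinearMap.applyₗ (x b))

/-- Evaluation of (the degree-`k` part of) an element of `Λ(ℝ⁷)*` on a `k`-tuple of vectors. -/
def evalForm (k : ℕ) (x : Fin k → V) : Lam →ₗ[ℝ] ℝ :=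
  ExteriorAlgebra.liftAlternating fun i =>
    if h : i = k then by subst h; exact evalAt x else 0

open ExteriorAlgebra Module Function

theorem Submodule.finrank_inf_ker_add_finrank_map {K V W : Type*} [DivisionRing K]
    [AddCommGroup V] [Module K V] [AddCommGroup W] [Module K W] (p : Submodule K V)
    [FiniteDimensional K p] (f : V →ₗ[K] W) :
    finrank K ↥(p ⊓ LinearMap.ker f) + finrank K ↥(p.map f) = finrank K p := by
  rw [← (f.domRestrict p).finrank_range_add_finrank_ker, LinearMap.range_domRestrict,
    LinearMap.ker_domRestrict, ← Submodule.map_comap_subtype, Submodule.finrank_map_subtype_eq,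
    add_comm]

namespace ExteriorAlgebra

variable {R M : Type*} [CommRing R] [AddCommGroup M] [Module R M]

theorem map_mulRight_exteriorPower_le {k : ℕ} {x : ExteriorAlgebra R M} (hx : x ∈ ⋀[R]^k M)
    (n : ℕ) : (⋀[R]^n M).map (LinearMap.mulRight R x) ≤ ⋀[R]^(n + k) M := by
  rintro _ ⟨y, hy, rfl⟩
  exact SetLike.mul_mem_graded hy hx

/-- `g = f ∘ σ` for a permutation `σ`, which changes `ιMulti` only by the sign of `σ`. -/
theorem ιMulti_comp_mem_of_range_subset {ι : Type*} {n : ℕ}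
    {p : Submodule R (ExteriorAlgebra R M)} {v : ι → M} {f g : Fin n → ι} (hg : Injective g)
    (hgf : Set.range g ⊆ Set.range f) (hf : ιMulti R n (v ∘ f) ∈ p) :
    ιMulti R n (v ∘ g) ∈ p := by
  choose τ hτ using fun x => hgf ⟨x, rfl⟩
  have hτ_inj : Injective τ := fun x y hxy => hg (by rw [← hτ x, ← hτ y, hxy])
  let σ := Equiv.ofBijective τ (Finite.injective_iff_bijective.mp hτ_inj)
  have hvg : v ∘ g = (v ∘ f) ∘ σ := by ext x; simp [σ, hτ]
  rw [hvg, AlternatingMap.map_perm]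
  rcases Int.units_eq_one_or (Equiv.Perm.sign σ) with h | h <;> simp [h, hf]

end ExteriorAlgebra

theorem span_range_θ : Submodule.span ℝ (Set.range θ) = ⊤ := by
  have : ⇑(Pi.basisFun ℝ (Fin 7)).dualBasis = θ := by
    ext i x
    simp [θ]
  exact this ▸ Basis.span_eq _

theorem finrank_exteriorPower_Vd (n : ℕ) : finrank ℝ (⋀[ℝ]^n Vd) = Nat.choose 7 n := by
  rw [exteriorPower.finrank_eq, Subspace.dual_finrank_eq, finrank_fin_fun]

theorem θ1_mem_exteriorPower (i : Fin 7) : θ1 i ∈ ⋀[ℝ]^1 Vd := by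
  rw [ExteriorAlgebra.exteriorPower, pow_one]
  exact LinearMap.mem_range_self (ι ℝ) (θ i)

theorem θ1_mul_θ1_mem_exteriorPower (i j : Fin 7) : θ1 i * θ1 j ∈ ⋀[ℝ]^2 Vd :=
  SetLike.mul_mem_graded (θ1_mem_exteriorPower i) (θ1_mem_exteriorPower j)

theorem w4_mem_exteriorPower (a b c d : Fin 7) : w4 a b c d ∈ ⋀[ℝ]^4 Vd :=
  SetLike.mul_mem_graded
    (SetLike.mul_mem_graded (θ1_mul_θ1_mem_exteriorPower a b) (θ1_mem_exteriorPower c))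
    (θ1_mem_exteriorPower d)

theorem psi0_mem_exteriorPower : psi0 ∈ ⋀[ℝ]^4 Vd := by
  unfold psi0
  repeat first
    | apply Submodule.add_mem | apply Submodule.sub_mem | exact w4_mem_exteriorPower _ _ _ _

theorem θ1_mul_θ1_mul_w4 (i j a b c d : Fin 7) :
    θ1 i * θ1 j * w4 a b c d = ιMulti ℝ 6 (θ ∘ ![i, j, a, b, c, d]) := by
  simp only [ιMulti_apply, List.ofFn_succ, List.ofFn_zero, List.prod_cons, List.prod_nil, θ1, w4,
    mul_assoc, mul_one]
  rfl

theorem ιMulti_θ_comp_eq_zero_of_not_injective {n : ℕ} {f : Fin n → Fin 7} (hf : ¬Injective f) :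
    ιMulti ℝ n (θ ∘ f) = 0 :=
  AlternatingMap.map_eq_zero_of_not_injective _ _ fun h => hf h.of_comp

/-- The entries of `complTuple m` are the indices other than `m`, ordered so that the one term of
`ψ₀` avoiding the first two, `i` and `j`, is `+θ^{abcd}` with `a, b, c, d` the remaining four. -/
def complTuple : Fin 7 → Fin 6 → Fin 7 :=
  ![![1, 2, 3, 4, 5, 6], ![0, 2, 3, 4, 5, 6], ![0, 1, 3, 4, 5, 6], ![0, 4, 1, 2, 5, 6],
    ![0, 3, 1, 2, 5, 6], ![1, 3, 0, 2, 4, 6], ![0, 5, 1, 2, 3, 4]]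

theorem exists_complTuple_eq_of_ne : ∀ m k, k ≠ m → ∃ y, complTuple m y = k := by
  decide

theorem θ1_mul_θ1_mul_psi0 (m : Fin 7) :
    θ1 (complTuple m 0) * θ1 (complTuple m 1) * psi0 = ιMulti ℝ 6 (θ ∘ complTuple m) := by
  fin_cases m <;>
  simp (disch := decide) only [complTuple, psi0, mul_add, mul_sub, θ1_mul_θ1_mul_w4,
    ιMulti_θ_comp_eq_zero_of_not_injective, add_zero, sub_zero, zero_add] <;>
  rfl

theorem exteriorPower_six_le_map_mulRight_psi0 :
    ⋀[ℝ]^6 Vd ≤ (⋀[ℝ]^2 Vd).map (LinearMap.mulRight ℝ psi0) := by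
  rw [← exteriorPower.ιMulti_family_span_fixedDegree_of_span ℝ span_range_θ, Submodule.span_le]
  rintro _ ⟨s, rfl⟩
  obtain ⟨m, -, hm⟩ := Finset.exists_mem_notMem_of_card_lt_card
    (s := s.val) (t := Finset.univ) (by simp [Set.powersetCard.card_eq])
  refine ιMulti_comp_mem_of_range_subset (Set.powersetCard.ofFinEmbEquiv.symm s).injective ?_
    ⟨_, θ1_mul_θ1_mem_exteriorPower _ _, θ1_mul_θ1_mul_psi0 m⟩
  rintro _ ⟨x, rfl⟩
  refine exists_complTuple_eq_of_ne m _ fun h => hm ?_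
  exact h ▸ (Set.powersetCard.mem_range_ofFinEmbEquiv_symm_iff_mem s _).mp ⟨x, rfl⟩

theorem map_mulRight_psi0_exteriorPower_two :
    (⋀[ℝ]^2 Vd).map (LinearMap.mulRight ℝ psi0) = ⋀[ℝ]^6 Vd :=
  le_antisymm (map_mulRight_exteriorPower_le psi0_mem_exteriorPower 2)
    exteriorPower_six_le_map_mulRight_psi0

/-- the subspace `Λ²₁₄ = {α ∈ Λ²(ℝ⁷)* : α ∧ ψ₀ = 0}`, i.e. the kernel of
wedging with `ψ₀` on 2-forms, has dimension 14. -/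
theorem finrank_lambda2_14 :
    Module.finrank ℝ
      ↥((⋀[ℝ]^2 Vd) ⊓ LinearMap.ker (LinearMap.mulRight ℝ psi0)) = 14 := by
  have h := (⋀[ℝ]^2 Vd).finrank_inf_ker_add_finrank_map (LinearMap.mulRight ℝ psi0)
  rw [map_mulRight_psi0_exteriorPower_two, finrank_exteriorPower_Vd,
    finrank_exteriorPower_Vd] at h
  norm_num [Nat.choose] at h
  omega
end
end

section
/- For every v ∈ ℝ⁷, (v ⌟ φ₀) ∧ ψ₀ = 3 ⋆₀ v♭, where v♭ is the 1-form dual to v under the Euclidean metric. In particular (v ⌟ φ₀) ∧ ψ₀ = 0 implies v = 0. -/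
set_option synthInstance.maxHeartbeats 1000000
set_option maxHeartbeats 1000000

noncomputable section

/-- Interior product (contraction) of a vector with elements of `Λ(ℝ⁷)*`. -/
def intProd (v : V) : Lam →ₗ[ℝ] Lam :=
  CliffordAlgebra.contractLeft (Module.Dual.eval ℝ V v)

/-- The Euclidean inner product on 1-forms. -/
def inner1 (α β : Lam) : ℝ :=
  ∑ x : Fin 1 → Fin 7, evalForm 1 (fun b => e (x b)) α * evalForm 1 (fun b => e (x b)) β

/-- The musical isomorphism: `v♭ = ∑ vⁱ θ^i`, as an element of `Λ¹(ℝ⁷)*`. -/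
def flat (v : V) : Lam := ∑ i : Fin 7, v i • θ1 i
open ExteriorAlgebra in
lemma theta1_sq (i : Fin 7) : θ1 i * θ1 i = 0 := ι_sq_zero _

open ExteriorAlgebra in
lemma theta1_anticomm (i j : Fin 7) : θ1 i * θ1 j = -(θ1 j * θ1 i) := by
  have h := ι_sq_zero (R := ℝ) (θ i + θ j)
  rw [map_add] at h
  rw [add_mul, mul_add, mul_add, ι_sq_zero, ι_sq_zero] at h
  unfold θ1
  linear_combination (norm := abel) h

lemma theta1_swap {i j : Fin 7} (h : j < i) : θ1 i * θ1 j = -(θ1 j * θ1 i) :=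
  theta1_anticomm i j

lemma theta1_swap' {i j : Fin 7} (h : j < i) (x : Lam) :
    θ1 i * (θ1 j * x) = -(θ1 j * (θ1 i * x)) := by
  rw [← mul_assoc, theta1_anticomm i j, neg_mul, mul_assoc]

lemma theta1_sq' (i : Fin 7) (x : Lam) : θ1 i * (θ1 i * x) = 0 := by
  rw [← mul_assoc, theta1_sq, zero_mul]

example : θ1 3 * (θ1 1 * (θ1 0 * (θ1 2 * (θ1 5 * θ1 4)))) = -(θ1 0 * (θ1 1 * (θ1 2 * (θ1 3 * (θ1 4 * θ1 5))))) := by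
  simp (config := {decide := true}) only [theta1_swap, theta1_swap', theta1_sq, theta1_sq', mul_neg, neg_neg, mul_zero, zero_mul, neg_zero]

example : θ1 3 * (θ1 1 * (θ1 0 * (θ1 2 * (θ1 5 * θ1 1)))) = 0 := by
  simp (config := {decide := true}) only [theta1_swap, theta1_swap', theta1_sq, theta1_sq', mul_neg, neg_neg, mul_zero, zero_mul, neg_zero]
lemma intProd_theta1_mul (v : V) (i : Fin 7) (x : Lam) :
    intProd v (θ1 i * x) = v i • x - θ1 i * intProd v x := by
  unfold intProd θ1
  rw [CliffordAlgebra.contractLeft_ι_mul]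
  rfl

lemma intProd_theta1 (v : V) (i : Fin 7) :
    intProd v (θ1 i) = algebraMap ℝ Lam (v i) := by
  unfold intProd θ1
  rw [CliffordAlgebra.contractLeft_ι]
  rfl

lemma intProd_w3 (v : V) (i j k : Fin 7) :
    intProd v (w3 i j k) = v i • (θ1 j * θ1 k) - v j • (θ1 i * θ1 k) + v k • (θ1 i * θ1 j) := by
  unfold w3
  rw [mul_assoc, intProd_theta1_mul, intProd_theta1_mul, intProd_theta1]
  rw [Algebra.algebraMap_eq_smul_one]
  simp only [mul_sub, mul_smul_comm, mul_one]
  abel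
open ExteriorAlgebra

/-- ascending enumeration of `Fin 7 \ {i}` -/
def asc (i : Fin 7) : Fin 6 → Fin 7 := fun b => if (b : ℕ) < (i : ℕ) then b.castSucc else b.succ

lemma asc_strictMono : ∀ i : Fin 7, StrictMono (asc i) := by decide
lemma asc_ne : ∀ (i : Fin 7) (b : Fin 6), asc i b ≠ i := by decide
lemma asc_image : ∀ i : Fin 7, Finset.image (asc i) Finset.univ = {i}ᶜ := by decide

/-- the 6-monomial missing `i` -/
def M (i : Fin 7) : Lam := ιMulti ℝ 6 (fun b => θ (asc i b))


/-- the θ's as a basis of `Vd` -/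
def Bθ : Module.Basis (Fin 7) ℝ Vd := (Pi.basisFun ℝ (Fin 7)).dualBasis

lemma Bθ_apply (i : Fin 7) : Bθ i = θ i := by
  ext x
  simp [Bθ, Module.Basis.dualBasis_apply, Pi.basisFun_repr]
  rfl

lemma theta_apply_e (i j : Fin 7) : θ i (e j) = if i = j then 1 else 0 := by
  show e j i = _
  rw [e, Pi.single_apply]

lemma evalAt_apply {k : ℕ} (x : Fin k → V) (w : Fin k → Vd) :
    evalAt x w = Matrix.det (Matrix.of fun a b => w a (x b)) := rfl

lemma evalForm_ιMulti {k : ℕ} (x : Fin k → V) (w : Fin k → Vd) :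
    evalForm k x (ιMulti ℝ k w) = evalAt x w := by
  unfold evalForm
  rw [liftAlternating_apply_ιMulti, dif_pos rfl]

lemma altmap_sum_apply {α : Type*} (s : Finset α) (f : α → (Vd [⋀^Fin 6]→ₗ[ℝ] Lam))
    (m : Fin 6 → Vd) : (∑ j ∈ s, f j) m = ∑ j ∈ s, f j m := by
  induction s using Finset.cons_induction with
  | empty => rfl
  | cons a s ha ih => rw [Finset.sum_cons, Finset.sum_cons, AlternatingMap.add_apply, ih]

lemma evalAt_asc (i j : Fin 7) :
    evalAt (fun b => e (asc j b)) (fun b => θ (asc i b)) = if i = j then 1 else 0 := by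
  rw [evalAt_apply]
  rcases eq_or_ne i j with rfl | hij
  · rw [if_pos rfl]
    have : (Matrix.of fun a b => θ (asc i a) (e (asc i b))) = 1 := by
      ext a b
      rw [Matrix.of_apply, theta_apply_e, Matrix.one_apply]
      simp [(asc_strictMono i).injective.eq_iff]
    rw [this, Matrix.det_one]
  · rw [if_neg hij]
    -- the row `a0` with `asc i a0 = j` is zero
    have hj : j ∈ Finset.image (asc i) Finset.univ := by
      rw [asc_image]; simpa using hij.symm
    obtain ⟨a0, -, ha0⟩ := Finset.mem_image.mp hj
    apply Matrix.det_eq_zero_of_row_eq_zero a0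
    intro b
    rw [Matrix.of_apply, ha0, theta_apply_e, if_neg (Ne.symm (asc_ne j b))]
lemma ιMulti_asc_eq (i : Fin 7) :
    ιMulti ℝ 6 (fun b => θ (asc i b))
      = ∑ j : Fin 7, evalAt (fun b => e (asc j b)) (fun b => θ (asc i b)) • M j := by
  simp only [evalAt_asc, ite_smul, one_smul, zero_smul, Finset.sum_ite_eq, Finset.mem_univ,
    if_true]
  rfl

lemma ιMulti_eq_sum (w : Fin 6 → Vd) :
    ιMulti ℝ 6 w = ∑ j : Fin 7, evalAt (fun b => e (asc j b)) w • M j := by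
  have key : (ιMulti ℝ 6 : Vd [⋀^Fin 6]→ₗ[ℝ] Lam)
      = ∑ j : Fin 7, (LinearMap.toSpanSingleton ℝ Lam (M j)).compAlternatingMap
          (evalAt (fun b => e (asc j b))) := by
    refine Module.Basis.ext_alternating Bθ (fun a ha => ?_)
    simp only [Bθ_apply]
    have hcard : ((Finset.image a Finset.univ)ᶜ : Finset (Fin 7)).card = 1 := by
      rw [Finset.card_compl, Finset.card_image_of_injective _ ha]; rfl
    obtain ⟨i, hi⟩ := Finset.card_eq_one.mp hcard
    have hs : Finset.image a Finset.univ = ({i}ᶜ : Finset (Fin 7)) := by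
      rw [← hi, compl_compl]
    have hinj := (asc_strictMono i).injective
    have hr : Set.range a = Set.range (asc i) := by
      rw [← Set.image_univ, ← Finset.coe_univ, ← Finset.coe_image, hs,
        ← asc_image i, Finset.coe_image, Finset.coe_univ, Set.image_univ]
    let σ : Equiv.Perm (Fin 6) :=
      (Equiv.ofInjective a ha).trans ((Equiv.setCongr hr).trans
        (Equiv.ofInjective (asc i) hinj).symm)
    have hcomp : ∀ x, asc i (σ x) = a x := fun x => by
      show asc i ((Equiv.ofInjective (asc i) hinj).symm
        (Equiv.setCongr hr ⟨a x, Set.mem_range_self x⟩)) = a x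
      rw [Equiv.apply_ofInjective_symm hinj]
      rfl
    have hfun : (fun x => θ (a x)) = (fun b => θ (asc i b)) ∘ σ :=
      funext fun x => congrArg θ (hcomp x).symm
    rw [hfun, AlternatingMap.map_perm, AlternatingMap.map_perm]
    congr 1
    rw [altmap_sum_apply]
    simp only [LinearMap.compAlternatingMap_apply, LinearMap.toSpanSingleton_apply]
    exact ιMulti_asc_eq i
  rw [key, altmap_sum_apply]
  simp only [LinearMap.compAlternatingMap_apply, LinearMap.toSpanSingleton_apply]

lemma expand6 (β : Lam) (hβ : β ∈ ⋀[ℝ]^6 Vd) :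
    β = ∑ j : Fin 7, evalForm 6 (fun b => e (asc j b)) β • M j := by
  rw [← ExteriorAlgebra.ιMulti_span_fixedDegree] at hβ
  induction hβ using Submodule.span_induction with
  | mem x hx =>
      obtain ⟨w, rfl⟩ := hx
      simp only [evalForm_ιMulti]
      exact ιMulti_eq_sum w
  | zero => simp
  | add x y _ _ hx hy =>
      simp only [map_add, add_smul, Finset.sum_add_distrib]
      rw [← hx, ← hy]
  | smul r x _ hx =>
      simp only [map_smul, smul_eq_mul, mul_smul, ← Finset.smul_sum]
      rw [← hx]
def ε (i : Fin 7) : ℝ := (-1) ^ (i : ℕ)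

lemma Me0 : M 0 = θ1 1 * (θ1 2 * (θ1 3 * (θ1 4 * (θ1 5 * θ1 6)))) := by
  rw [M]
  simp only [show asc 0 = ![1,2,3,4,5,6] from by decide]
  simp [Matrix.vecTail, Function.comp_def, Matrix.cons_val_zero, Matrix.cons_val_succ, θ1]

lemma Me1 : M 1 = θ1 0 * (θ1 2 * (θ1 3 * (θ1 4 * (θ1 5 * θ1 6)))) := by
  rw [M]
  simp only [show asc 1 = ![0,2,3,4,5,6] from by decide]
  simp [Matrix.vecTail, Function.comp_def, Matrix.cons_val_zero, Matrix.cons_val_succ, θ1]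

lemma Me2 : M 2 = θ1 0 * (θ1 1 * (θ1 3 * (θ1 4 * (θ1 5 * θ1 6)))) := by
  rw [M]
  simp only [show asc 2 = ![0,1,3,4,5,6] from by decide]
  simp [Matrix.vecTail, Function.comp_def, Matrix.cons_val_zero, Matrix.cons_val_succ, θ1]

lemma Me3 : M 3 = θ1 0 * (θ1 1 * (θ1 2 * (θ1 4 * (θ1 5 * θ1 6)))) := by
  rw [M]
  simp only [show asc 3 = ![0,1,2,4,5,6] from by decide]
  simp [Matrix.vecTail, Function.comp_def, Matrix.cons_val_zero, Matrix.cons_val_succ, θ1]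

lemma Me4 : M 4 = θ1 0 * (θ1 1 * (θ1 2 * (θ1 3 * (θ1 5 * θ1 6)))) := by
  rw [M]
  simp only [show asc 4 = ![0,1,2,3,5,6] from by decide]
  simp [Matrix.vecTail, Function.comp_def, Matrix.cons_val_zero, Matrix.cons_val_succ, θ1]

lemma Me5 : M 5 = θ1 0 * (θ1 1 * (θ1 2 * (θ1 3 * (θ1 4 * θ1 6)))) := by
  rw [M]
  simp only [show asc 5 = ![0,1,2,3,4,6] from by decide]
  simp [Matrix.vecTail, Function.comp_def, Matrix.cons_val_zero, Matrix.cons_val_succ, θ1]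

lemma Me6 : M 6 = θ1 0 * (θ1 1 * (θ1 2 * (θ1 3 * (θ1 4 * θ1 5)))) := by
  rw [M]
  simp only [show asc 6 = ![0,1,2,3,4,5] from by decide]
  simp [Matrix.vecTail, Function.comp_def, Matrix.cons_val_zero, Matrix.cons_val_succ, θ1]

lemma diagv0 : θ1 0 * M 0 = vol0 := by
  rw [Me0]
  simp (config := {decide := true}) [theta1_swap, theta1_swap', theta1_sq, theta1_sq', vol0, mul_assoc]

lemma diagv1 : θ1 1 * M 1 = -vol0 := by
  rw [Me1]
  simp (config := {decide := true}) [theta1_swap, theta1_swap', theta1_sq, theta1_sq', vol0, mul_assoc]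

lemma diagv2 : θ1 2 * M 2 = vol0 := by
  rw [Me2]
  simp (config := {decide := true}) [theta1_swap, theta1_swap', theta1_sq, theta1_sq', vol0, mul_assoc]

lemma diagv3 : θ1 3 * M 3 = -vol0 := by
  rw [Me3]
  simp (config := {decide := true}) [theta1_swap, theta1_swap', theta1_sq, theta1_sq', vol0, mul_assoc]

lemma diagv4 : θ1 4 * M 4 = vol0 := by
  rw [Me4]
  simp (config := {decide := true}) [theta1_swap, theta1_swap', theta1_sq, theta1_sq', vol0, mul_assoc]

lemma diagv5 : θ1 5 * M 5 = -vol0 := by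
  rw [Me5]
  simp (config := {decide := true}) [theta1_swap, theta1_swap', theta1_sq, theta1_sq', vol0, mul_assoc]

lemma diagv6 : θ1 6 * M 6 = vol0 := by
  rw [Me6]
  simp (config := {decide := true}) [theta1_swap, theta1_swap', theta1_sq, theta1_sq', vol0, mul_assoc]

lemma diag (j : Fin 7) : θ1 j * M j = ε j • vol0 := by
  fin_cases j
  · show θ1 0 * M 0 = ε 0 • vol0
    rw [diagv0, show ε 0 = 1 from by rw [ε, show ((0:Fin 7):ℕ) = 0 from rfl]; norm_num]
    norm_num
  · show θ1 1 * M 1 = ε 1 • vol0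
    rw [diagv1, show ε 1 = (-1) from by rw [ε, show ((1:Fin 7):ℕ) = 1 from rfl]; norm_num]
    norm_num
  · show θ1 2 * M 2 = ε 2 • vol0
    rw [diagv2, show ε 2 = 1 from by rw [ε, show ((2:Fin 7):ℕ) = 2 from rfl]; norm_num]
    norm_num
  · show θ1 3 * M 3 = ε 3 • vol0
    rw [diagv3, show ε 3 = (-1) from by rw [ε, show ((3:Fin 7):ℕ) = 3 from rfl]; norm_num]
    norm_num
  · show θ1 4 * M 4 = ε 4 • vol0
    rw [diagv4, show ε 4 = 1 from by rw [ε, show ((4:Fin 7):ℕ) = 4 from rfl]; norm_num]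
    norm_num
  · show θ1 5 * M 5 = ε 5 • vol0
    rw [diagv5, show ε 5 = (-1) from by rw [ε, show ((5:Fin 7):ℕ) = 5 from rfl]; norm_num]
    norm_num
  · show θ1 6 * M 6 = ε 6 • vol0
    rw [diagv6, show ε 6 = 1 from by rw [ε, show ((6:Fin 7):ℕ) = 6 from rfl]; norm_num]
    norm_num

lemma offdiag {k j : Fin 7} (h : k ≠ j) : θ1 k * M j = 0 := by
  have heq : θ1 k * M j
      = ExteriorAlgebra.ιMulti ℝ 7 (fun x => θ ((Fin.cons k (asc j) : Fin 7 → Fin 7) x)) := by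
    rw [ExteriorAlgebra.ιMulti_succ_apply]
    simp [M, θ1, Matrix.vecTail, Function.comp_def, Fin.cons_succ, Fin.cons_zero]
  rw [heq]
  apply AlternatingMap.map_eq_zero_of_not_injective
  have hk : k ∈ Finset.image (asc j) Finset.univ := by rw [asc_image]; simpa using h
  obtain ⟨b, -, hb⟩ := Finset.mem_image.mp hk
  intro hinj
  have h0 : (fun x => θ ((Fin.cons k (asc j) : Fin 7 → Fin 7) x)) 0
      = (fun x => θ ((Fin.cons k (asc j) : Fin 7 → Fin 7) x)) b.succ := by
    simp [Fin.cons_zero, Fin.cons_succ, hb]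
  exact (Fin.succ_ne_zero b) (hinj h0).symm

lemma vol0_eq : vol0
    = ExteriorAlgebra.ιMulti ℝ 7 (fun x => θ ((Fin.cons 0 (asc 0) : Fin 7 → Fin 7) x)) := by
  have h1 : vol0 = θ1 0 * M 0 := by rw [Me0]; simp [vol0, mul_assoc]
  rw [h1, ExteriorAlgebra.ιMulti_succ_apply]
  simp [M, θ1, Matrix.vecTail, Function.comp_def, Fin.cons_succ, Fin.cons_zero]

lemma evalForm7_vol0 : evalForm 7 (fun b => e b) vol0 = 1 := by
  rw [vol0_eq, evalForm_ιMulti, evalAt_apply]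
  have hid : ∀ x : Fin 7, (Fin.cons (0 : Fin 7) (asc 0) : Fin 7 → Fin 7) x = x := by decide
  have h : (Matrix.of fun a b => θ ((Fin.cons (0:Fin 7) (asc 0) : Fin 7 → Fin 7) a) (e b)) = 1 := by
    ext a b
    rw [Matrix.of_apply, hid, theta_apply_e, Matrix.one_apply]
  rw [h, Matrix.det_one]

lemma vol0_smul_inj {x y : ℝ} (h : x • vol0 = y • vol0) : x = y := by
  have h2 := congrArg (evalForm 7 (fun b => e b)) h
  simpa [evalForm7_vol0] using h2
lemma evalForm_one (x : Fin 1 → V) (i : Fin 7) : evalForm 1 x (θ1 i) = θ i (x 0) := by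
  have h : θ1 i = ExteriorAlgebra.ιMulti ℝ 1 ![θ i] := by
    simp [ExteriorAlgebra.ιMulti_succ_apply, ExteriorAlgebra.ιMulti_zero_apply, θ1]
  rw [h, evalForm_ιMulti, evalAt_apply, Matrix.det_fin_one]
  simp

lemma inner1_theta1 (k i : Fin 7) : inner1 (θ1 k) (θ1 i) = if k = i then 1 else 0 := by
  unfold inner1
  rw [← Equiv.sum_comp (Equiv.funUnique (Fin 1) (Fin 7)).symm]
  simp only [evalForm_one]
  simp [Equiv.funUnique, theta_apply_e, mul_ite, ite_mul, mul_one, mul_zero,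
    Finset.sum_ite_eq, eq_comm]

lemma inner1_flat (k : Fin 7) (v : V) : inner1 (θ1 k) (flat v) = v k := by
  unfold inner1 flat
  rw [← Equiv.sum_comp (Equiv.funUnique (Fin 1) (Fin 7)).symm]
  simp only [map_sum, map_smul, evalForm_one, smul_eq_mul]
  simp [Equiv.funUnique, theta_apply_e, mul_ite, ite_mul, mul_one, mul_zero, mul_boole,
    Finset.sum_ite_eq, Finset.sum_ite_eq', eq_comm]

lemma mem1 (n : Fin 7) : θ1 n ∈ ⋀[ℝ]^1 Vd := by
  show θ1 n ∈ LinearMap.range (ExteriorAlgebra.ι ℝ (M := Vd)) ^ 1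
  rw [pow_one]
  exact ⟨θ n, rfl⟩

lemma star_theta1 (star : Lam →ₗ[ℝ] Lam)
    (hstar : ∀ α β : Lam, α ∈ ⋀[ℝ]^1 Vd → β ∈ ⋀[ℝ]^1 Vd →
      α * star β = inner1 α β • vol0)
    (hdeg : ∀ β : Lam, β ∈ ⋀[ℝ]^1 Vd → star β ∈ ⋀[ℝ]^6 Vd) (i : Fin 7) :
    star (θ1 i) = ε i • M i := by
  have hexp := expand6 _ (hdeg _ (mem1 i))
  have hck : ∀ k, evalForm 6 (fun b => e (asc k b)) (star (θ1 i)) = if k = i then ε i else 0 := by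
    intro k
    have hε : ε k * ε k = 1 := by rw [ε, ← mul_pow]; norm_num
    have h1 : θ1 k * star (θ1 i) = (if k = i then (1:ℝ) else 0) • vol0 := by
      rw [hstar _ _ (mem1 k) (mem1 i), inner1_theta1]
    have h2 : θ1 k * star (θ1 i)
        = (evalForm 6 (fun b => e (asc k b)) (star (θ1 i)) * ε k) • vol0 := by
      conv_lhs => rw [hexp]
      rw [Finset.mul_sum, Finset.sum_eq_single k ?_ ?_]
      · rw [mul_smul_comm, diag, smul_smul]
      · intro j _ hj
        rw [mul_smul_comm, offdiag (Ne.symm hj), smul_zero]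
      · intro h; exact absurd (Finset.mem_univ k) h
    have heq := vol0_smul_inj (h2.symm.trans h1)
    have hh : evalForm 6 (fun b => e (asc k b)) (star (θ1 i))
        = (if k = i then (1:ℝ) else 0) * ε k := by
      rw [← heq, mul_assoc, hε, mul_one]
    rcases eq_or_ne k i with rfl | hne
    · simpa using hh
    · simp only [if_neg hne, zero_mul] at hh
      rw [hh, if_neg hne]
  calc star (θ1 i) = ∑ j, evalForm 6 (fun b => e (asc j b)) (star (θ1 i)) • M j := hexp
    _ = ε i • M i := by
        simp only [hck, ite_smul, zero_smul]
        rw [Finset.sum_ite_eq' Finset.univ i (fun j => ε i • M j), if_pos (Finset.mem_univ i)]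
lemma lhs_eq (v : V) : intProd v phi0 * psi0 =
    (3*v 0) • (θ1 1*(θ1 2*(θ1 3*(θ1 4*(θ1 5*θ1 6)))))
  - (3*v 1) • (θ1 0*(θ1 2*(θ1 3*(θ1 4*(θ1 5*θ1 6)))))
  + (3*v 2) • (θ1 0*(θ1 1*(θ1 3*(θ1 4*(θ1 5*θ1 6)))))
  - (3*v 3) • (θ1 0*(θ1 1*(θ1 2*(θ1 4*(θ1 5*θ1 6)))))
  + (3*v 4) • (θ1 0*(θ1 1*(θ1 2*(θ1 3*(θ1 5*θ1 6)))))
  - (3*v 5) • (θ1 0*(θ1 1*(θ1 2*(θ1 3*(θ1 4*θ1 6)))))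
  + (3*v 6) • (θ1 0*(θ1 1*(θ1 2*(θ1 3*(θ1 4*θ1 5))))) := by
  simp only [phi0, psi0, map_add, map_sub, intProd_w3, w4]
  simp only [add_mul, sub_mul, smul_mul_assoc, mul_add, mul_sub, mul_assoc]
  simp (config := {decide := true}) only [theta1_swap, theta1_swap', theta1_sq, theta1_sq',
    mul_neg, neg_neg, mul_zero, zero_mul, neg_zero, smul_neg, smul_zero]
  module
/-- for every `v ∈ ℝ⁷`, `(v ⌟ φ₀) ∧ ψ₀ = 3 ⋆₀(v♭)`, where `⋆₀` is the
Euclidean Hodge star (characterised on 1-forms by `α ∧ ⋆₀β = ⟨α,β⟩ vol₀` and by mapping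
1-forms to 6-forms).  In particular `(v ⌟ φ₀) ∧ ψ₀ = 0` implies `v = 0`. -/
theorem contraction_wedge_psi0 (star : Lam →ₗ[ℝ] Lam)
    (hstar : ∀ α β : Lam, α ∈ ⋀[ℝ]^1 Vd → β ∈ ⋀[ℝ]^1 Vd →
      α * star β = inner1 α β • vol0)
    (hdeg : ∀ β : Lam, β ∈ ⋀[ℝ]^1 Vd → star β ∈ ⋀[ℝ]^6 Vd) :
    (∀ v : V, intProd v phi0 * psi0 = (3 : ℝ) • star (flat v)) ∧
    (∀ v : V, intProd v phi0 * psi0 = 0 → v = 0) := by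
  have part1 : ∀ v : V, intProd v phi0 * psi0 = (3 : ℝ) • star (flat v) := by
    intro v
    have hsf : star (flat v) = ∑ i, v i • (ε i • M i) := by
      rw [flat, map_sum]
      exact Finset.sum_congr rfl fun i _ => by rw [map_smul, star_theta1 star hstar hdeg i]
    rw [lhs_eq, hsf, Fin.sum_univ_seven]
    simp only [Me0, Me1, Me2, Me3, Me4, Me5, Me6,
      show ε 0 = 1 from by rw [ε, show ((0:Fin 7):ℕ) = 0 from rfl]; norm_num,
      show ε 1 = -1 from by rw [ε, show ((1:Fin 7):ℕ) = 1 from rfl]; norm_num,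
      show ε 2 = 1 from by rw [ε, show ((2:Fin 7):ℕ) = 2 from rfl]; norm_num,
      show ε 3 = -1 from by rw [ε, show ((3:Fin 7):ℕ) = 3 from rfl]; norm_num,
      show ε 4 = 1 from by rw [ε, show ((4:Fin 7):ℕ) = 4 from rfl]; norm_num,
      show ε 5 = -1 from by rw [ε, show ((5:Fin 7):ℕ) = 5 from rfl]; norm_num,
      show ε 6 = 1 from by rw [ε, show ((6:Fin 7):ℕ) = 6 from rfl]; norm_num]
    module
  refine ⟨part1, fun v hv => ?_⟩
  have h3 : (3 : ℝ) • star (flat v) = 0 := by rw [← part1 v, hv]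
  have h0 : star (flat v) = 0 := by
    rcases smul_eq_zero.mp h3 with h | h
    · norm_num at h
    · exact h
  have hmf : flat v ∈ ⋀[ℝ]^1 Vd := by
    rw [flat]
    exact Submodule.sum_mem _ fun i _ => Submodule.smul_mem _ _ (mem1 i)
  funext k
  have hk := hstar (θ1 k) (flat v) (mem1 k) hmf
  rw [h0, mul_zero, inner1_flat] at hk
  have hz := vol0_smul_inj (show v k • vol0 = (0:ℝ) • vol0 by rw [zero_smul, ← hk])
  simpa using hz
end
end
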